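/- arXiv:1802.09031 — 4 statements merged into one kernel-verified Lean document; each statement's English description precedes it below -/
import Mathlib

section
/- For any δ > 0, the empirical margin distribution is bounded by the empirical functional gradient norm of the multiclass logistic loss: P_{ν_n}[ m_f(X,Y) ≤ δ ] ≤ (1 + 1/exp(-δ)) · √c · E_{ν_{n,X}}[ ||∇_f L_n(f)(X)||_2 ], where ∇_f L_n(f)(x_i) = ∂_ζ l(f(x_i), y_i). -/
open Finset in
/-- Empirical margin distribution bound by the empirical functional gradient norm for the
multiclass logistic loss: for any `δ > 0`,
`P_{ν_n}[m_f(X,Y) ≤ δ] ≤ (1 + exp δ) * √c * E_{ν_{n,X}} ‖∇_f L_n(f)(X)‖₂`,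
where `∇_f L_n(f)(x_i)_{y'} = -1[y' = y_i] + exp (f_{y'}(x_i)) / ∑_{yb} exp (f_{yb}(x_i))`. -/
theorem stmt_2 {X Y : Type*} [Fintype Y] [DecidableEq Y]
    (hY : ∀ y : Y, (Finset.univ.erase y).Nonempty)
    (n : ℕ) (hn : 0 < n) (x : Fin n → X) (y : Fin n → Y)
    (f : X → Y → ℝ) (δ : ℝ) (hδ : 0 < δ) :
    ((Finset.univ.filter (fun i : Fin n =>
        f (x i) (y i) - (Finset.univ.erase (y i)).sup' (hY (y i)) (fun y' => f (x i) y') ≤ δ)).card : ℝ) / n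
      ≤ (1 + Real.exp δ) * Real.sqrt (Fintype.card Y) *
        ((1 / (n : ℝ)) * ∑ i : Fin n, Real.sqrt (∑ y' : Y,
          ((if y' = y i then (-1 : ℝ) else 0) +
            Real.exp (f (x i) y') / ∑ yb : Y, Real.exp (f (x i) yb)) ^ 2)) := by
  have hYne : Nonempty Y := ⟨y ⟨0, hn⟩⟩
  set G : Fin n → ℝ := fun i => Real.sqrt (∑ y' : Y,
      ((if y' = y i then (-1 : ℝ) else 0) +
        Real.exp (f (x i) y') / ∑ yb : Y, Real.exp (f (x i) yb)) ^ 2) with hG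
  set F := Finset.univ.filter (fun i : Fin n =>
      f (x i) (y i) - (Finset.univ.erase (y i)).sup' (hY (y i)) (fun y' => f (x i) y') ≤ δ) with hF
  have hE : (0:ℝ) < 1 + Real.exp δ := by positivity
  have key : ∀ i ∈ F, 1 / (1 + Real.exp δ) ≤ G i := by
    intro i hi
    rw [hF, Finset.mem_filter] at hi
    obtain ⟨y', hy'mem, hy'⟩ := Finset.exists_mem_eq_sup' (hY (y i)) (fun y' => f (x i) y')
    have hne : y' ≠ y i := Finset.ne_of_mem_erase hy'mem
    have hmar : f (x i) (y i) - f (x i) y' ≤ δ := by rw [← hy']; exact hi.2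
    have hSpos : 0 < ∑ yb : Y, Real.exp (f (x i) yb) :=
      Finset.sum_pos (fun _ _ => Real.exp_pos _) Finset.univ_nonempty
    set S : ℝ := ∑ yb : Y, Real.exp (f (x i) yb) with hS
    set a : ℝ := Real.exp (f (x i) (y i)) with ha
    set b : ℝ := Real.exp (f (x i) y') with hb
    have hab : a ≤ Real.exp δ * b := by
      rw [ha, hb, ← Real.exp_add]
      exact Real.exp_le_exp.mpr (by linarith)
    have habS : a + b ≤ S := by
      have h := Finset.sum_le_sum_of_subset_of_nonneg (s := ({y i, y'} : Finset Y))
        (f := fun yb => Real.exp (f (x i) yb)) (Finset.subset_univ _)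
        (fun _ _ _ => (Real.exp_pos _).le)
      rwa [Finset.sum_pair (Ne.symm hne)] at h
    have hbpos : 0 < b := Real.exp_pos _
    have hapos : 0 < a := Real.exp_pos _
    have h2 : b / S ≤ 1 - a / S := by
      have h : b / S + a / S ≤ 1 := by
        rw [← add_div, div_le_one hSpos]; linarith
      linarith
    have h1 : a / S ≤ Real.exp δ * (b / S) := by
      rw [← mul_div_assoc]
      gcongr
    have hp2 : 1 / (1 + Real.exp δ) ≤ 1 - a / S := by
      rw [div_le_iff₀ hE]
      nlinarith [Real.exp_pos δ, div_nonneg hbpos.le hSpos.le]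
    have hsingle := Finset.single_le_sum (f := fun y'' : Y =>
        ((if y'' = y i then (-1 : ℝ) else 0) +
          Real.exp (f (x i) y'') / ∑ yb : Y, Real.exp (f (x i) yb)) ^ 2)
      (fun j _ => sq_nonneg _) (Finset.mem_univ (y i))
    have hterm : (1 - a / S) ^ 2 ≤ ∑ y'' : Y,
        ((if y'' = y i then (-1 : ℝ) else 0) +
          Real.exp (f (x i) y'') / ∑ yb : Y, Real.exp (f (x i) yb)) ^ 2 := by
      calc (1 - a / S) ^ 2
          = ((if (y i) = (y i) then (-1 : ℝ) else 0) +
              Real.exp (f (x i) (y i)) / ∑ yb : Y, Real.exp (f (x i) yb)) ^ 2 := by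
            rw [if_pos rfl, ← hS, ← ha]; ring
        _ ≤ _ := hsingle
    have hfin : 1 - a / S ≤ G i := by
      rw [hG]
      calc 1 - a / S = Real.sqrt ((1 - a / S) ^ 2) := by
            rw [Real.sqrt_sq (by have := one_div_pos.mpr hE; linarith : (0:ℝ) ≤ 1 - a/S)]
        _ ≤ _ := Real.sqrt_le_sqrt hterm
    linarith
  have hsum : (F.card : ℝ) * (1 / (1 + Real.exp δ)) ≤ ∑ i : Fin n, G i := by
    calc (F.card : ℝ) * (1 / (1 + Real.exp δ)) = ∑ _i ∈ F, 1 / (1 + Real.exp δ) := by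
          rw [Finset.sum_const, nsmul_eq_mul]
      _ ≤ ∑ i ∈ F, G i := Finset.sum_le_sum key
      _ ≤ ∑ i : Fin n, G i := Finset.sum_le_sum_of_subset_of_nonneg (Finset.subset_univ _)
          (fun i _ _ => Real.sqrt_nonneg _)
  have hGs : 0 ≤ ∑ i : Fin n, G i := Finset.sum_nonneg fun i _ => Real.sqrt_nonneg _
  have hc : (1:ℝ) ≤ Real.sqrt (Fintype.card Y) := by
    rw [show (1:ℝ) = Real.sqrt 1 by simp]
    exact Real.sqrt_le_sqrt (by exact_mod_cast Fintype.card_pos)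
  have hnpos : (0:ℝ) < n := by exact_mod_cast hn
  have step1 : (F.card : ℝ) / n ≤ (1 + Real.exp δ) * ((1 / (n:ℝ)) * ∑ i : Fin n, G i) := by
    rw [div_le_iff₀ hnpos]
    have hcard : (F.card : ℝ) ≤ (1 + Real.exp δ) * ∑ i : Fin n, G i := by
      have h := mul_le_mul_of_nonneg_left hsum hE.le
      rw [mul_comm ((F.card:ℝ)) _, ← mul_assoc, mul_one_div, div_self hE.ne'] at h
      linarith
    calc (F.card : ℝ) ≤ (1 + Real.exp δ) * ∑ i : Fin n, G i := hcard
      _ = (1 + Real.exp δ) * ((1 / (n:ℝ)) * ∑ i : Fin n, G i) * n := by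
          field_simp
  calc (F.card : ℝ) / n ≤ (1 + Real.exp δ) * ((1 / (n:ℝ)) * ∑ i : Fin n, G i) := step1
    _ = 1 * ((1 + Real.exp δ) * ((1 / (n:ℝ)) * ∑ i : Fin n, G i)) := by ring
    _ ≤ Real.sqrt (Fintype.card Y) * ((1 + Real.exp δ) * ((1 / (n:ℝ)) * ∑ i : Fin n, G i)) := by
        apply mul_le_mul_of_nonneg_right hc
        positivity
    _ = (1 + Real.exp δ) * Real.sqrt (Fintype.card Y) * ((1 / (n:ℝ)) * ∑ i : Fin n, G i) := by ring
end

section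
/- For the multiclass logistic loss, the probability under the empirical measure that the predicted probability of the correct class is at most 1/2 satisfies P_{ν_n}[1 - p_f(Y|X) ≥ 1/2] ≤ 2√c · E_{ν_{n,X}}[ ||∇_f L_n(f)(X)||_2 ]. -/
open Finset in
/-- For the multiclass logistic loss, the empirical probability that the predicted probability of
the correct class is at most `1/2` satisfies
`P_{ν_n}[1 - p_f(Y|X) ≥ 1/2] ≤ 2 √c * E_{ν_{n,X}} ‖∇_f L_n(f)(X)‖₂`. -/
theorem stmt_3 {X Y : Type*} [Fintype Y] [DecidableEq Y]
    (n : ℕ) (hn : 0 < n) (x : Fin n → X) (y : Fin n → Y) (f : X → Y → ℝ) :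
    ((Finset.univ.filter (fun i : Fin n =>
        (1 : ℝ) / 2 ≤ 1 - Real.exp (f (x i) (y i)) / ∑ yb : Y, Real.exp (f (x i) yb))).card : ℝ) / n
      ≤ 2 * Real.sqrt (Fintype.card Y) *
        ((1 / (n : ℝ)) * ∑ i : Fin n, Real.sqrt (∑ y' : Y,
          ((if y' = y i then (-1 : ℝ) else 0) +
            Real.exp (f (x i) y') / ∑ yb : Y, Real.exp (f (x i) yb)) ^ 2)) := by
  have hY : Nonempty Y := ⟨y ⟨0, hn⟩⟩
  have hc : (1 : ℝ) ≤ Real.sqrt (Fintype.card Y) := by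
    rw [show (1:ℝ) = Real.sqrt 1 by simp]
    apply Real.sqrt_le_sqrt
    exact_mod_cast Fintype.card_pos
  have key : ∀ i : Fin n,
      (if (1 : ℝ) / 2 ≤ 1 - Real.exp (f (x i) (y i)) / ∑ yb : Y, Real.exp (f (x i) yb)
        then (1:ℝ) else 0)
      ≤ 2 * Real.sqrt (Fintype.card Y) * Real.sqrt (∑ y' : Y,
          ((if y' = y i then (-1 : ℝ) else 0) +
            Real.exp (f (x i) y') / ∑ yb : Y, Real.exp (f (x i) yb)) ^ 2) := by
    intro i
    set p : ℝ := Real.exp (f (x i) (y i)) / ∑ yb : Y, Real.exp (f (x i) yb) with hp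
    split_ifs with h
    · have h1 : (1 - p) ^ 2 ≤ ∑ y' : Y,
          ((if y' = y i then (-1 : ℝ) else 0) +
            Real.exp (f (x i) y') / ∑ yb : Y, Real.exp (f (x i) yb)) ^ 2 := by
        have h0 := Finset.single_le_sum
          (f := fun y' : Y => ((if y' = y i then (-1 : ℝ) else 0) +
            Real.exp (f (x i) y') / ∑ yb : Y, Real.exp (f (x i) yb)) ^ 2)
          (fun y' _ => sq_nonneg _) (Finset.mem_univ (y i))
        calc (1 - p) ^ 2 = ((if y i = y i then (-1 : ℝ) else 0) +
            Real.exp (f (x i) (y i)) / ∑ yb : Y, Real.exp (f (x i) yb)) ^ 2 := by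
              rw [if_pos rfl, ← hp]; ring
          _ ≤ _ := h0
      have h2 : 1 - p ≤ Real.sqrt (∑ y' : Y,
          ((if y' = y i then (-1 : ℝ) else 0) +
            Real.exp (f (x i) y') / ∑ yb : Y, Real.exp (f (x i) yb)) ^ 2) := by
        calc 1 - p = Real.sqrt ((1 - p) ^ 2) := by
              rw [Real.sqrt_sq (by linarith)]
          _ ≤ _ := Real.sqrt_le_sqrt h1
      calc (1:ℝ) ≤ 2 * (1 - p) := by linarith
        _ ≤ 2 * Real.sqrt (∑ y' : Y,
            ((if y' = y i then (-1 : ℝ) else 0) +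
              Real.exp (f (x i) y') / ∑ yb : Y, Real.exp (f (x i) yb)) ^ 2) := by linarith
        _ ≤ _ := by
            rw [mul_assoc]
            have hq := Real.sqrt_nonneg (∑ y' : Y,
              ((if y' = y i then (-1 : ℝ) else 0) +
                Real.exp (f (x i) y') / ∑ yb : Y, Real.exp (f (x i) yb)) ^ 2)
            nlinarith
    · positivity
  have hcard : ((Finset.univ.filter (fun i : Fin n =>
      (1 : ℝ) / 2 ≤ 1 - Real.exp (f (x i) (y i)) / ∑ yb : Y, Real.exp (f (x i) yb))).card : ℝ)
      = ∑ i : Fin n, (if (1 : ℝ) / 2 ≤ 1 - Real.exp (f (x i) (y i)) / ∑ yb : Y, Real.exp (f (x i) yb) then (1:ℝ) else 0) := by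
    rw [Finset.card_filter]
    push_cast
    rfl
  rw [hcard, div_le_iff₀ (by exact_mod_cast hn)]
  refine le_trans (Finset.sum_le_sum (fun i _ => key i)) (le_of_eq ?_)
  rw [← Finset.mul_sum]
  have hne : (n : ℝ) ≠ 0 := by positivity
  field_simp
end

section
/- For the multiclass logistic loss, if l(f(X),Y) ≤ M holds ν_n-almost surely for some M > 0, then the empirical functional gradient norm is lower-bounded by a multiple of the empirical risk: E_{ν_{n,X}}[ ||∇_f L_n(f)(X)||_2 ] ≥ ((1 - exp(-M))/(√c · M)) · E_{ν_n}[ l(f(X),Y) ]. -/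
open Finset in
lemma convex_exp_bound (M t : ℝ) (hM : 0 < M) (ht0 : 0 ≤ t) (htM : t ≤ M) :
    ((1 - Real.exp (-M)) / M) * t ≤ 1 - Real.exp (-t) := by
  have h := convexOn_exp.2 (Set.mem_univ (-M)) (Set.mem_univ 0)
    (div_nonneg ht0 hM.le) (by have := (div_le_one hM).mpr htM; linarith : (0:ℝ) ≤ 1 - t / M)
    (by ring)
  simp only [smul_eq_mul, mul_zero, add_zero, Real.exp_zero, mul_one] at h
  have hMne : (M:ℝ) ≠ 0 := hM.ne'
  have : t / M * -M = -t := by field_simp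
  rw [this] at h
  have : (1 - Real.exp (-M)) / M * t = t / M * (1 - Real.exp (-M)) := by ring
  rw [this]
  nlinarith [h]

open Finset in
/-- For the multiclass logistic loss `l(f(x),y) = -log p_f(y|x)`, if `l(f(x_i),y_i) ≤ M` for all
samples and `M > 0`, then the empirical functional gradient norm is lower-bounded by a multiple of
the empirical risk:
`E_{ν_{n,X}} ‖∇_f L_n(f)(X)‖₂ ≥ ((1 - exp (-M)) / (√c * M)) * E_{ν_n} l(f(X),Y)`. -/
theorem stmt_4 {X Y : Type*} [Fintype Y] [DecidableEq Y]
    (n : ℕ) (hn : 0 < n) (x : Fin n → X) (y : Fin n → Y) (f : X → Y → ℝ)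
    (M : ℝ) (hM : 0 < M)
    (hbound : ∀ i : Fin n,
      -Real.log (Real.exp (f (x i) (y i)) / ∑ yb : Y, Real.exp (f (x i) yb)) ≤ M) :
    (1 / (n : ℝ)) * ∑ i : Fin n, Real.sqrt (∑ y' : Y,
        ((if y' = y i then (-1 : ℝ) else 0) +
          Real.exp (f (x i) y') / ∑ yb : Y, Real.exp (f (x i) yb)) ^ 2)
      ≥ ((1 - Real.exp (-M)) / (Real.sqrt (Fintype.card Y) * M)) *
        ((1 / (n : ℝ)) * ∑ i : Fin n,
          -Real.log (Real.exp (f (x i) (y i)) / ∑ yb : Y, Real.exp (f (x i) yb))) := by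
  by_cases hY : Nonempty Y
  · -- setup
    set S : Fin n → ℝ := fun i => ∑ yb : Y, Real.exp (f (x i) yb) with hS
    have hSpos : ∀ i, 0 < S i := fun i =>
      Finset.sum_pos (fun _ _ => Real.exp_pos _) Finset.univ_nonempty
    set p : Fin n → ℝ := fun i => Real.exp (f (x i) (y i)) / S i with hp
    have hppos : ∀ i, 0 < p i := fun i => div_pos (Real.exp_pos _) (hSpos i)
    have hple : ∀ i, p i ≤ 1 := by
      intro i
      rw [hp, div_le_one (hSpos i)]
      exact Finset.single_le_sum (fun yb _ => (Real.exp_pos (f (x i) yb)).le)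
        (Finset.mem_univ (y i))
    set l : Fin n → ℝ := fun i => -Real.log (p i) with hl
    have hl0 : ∀ i, 0 ≤ l i := by
      intro i
      simp only [hl, neg_nonneg]
      exact Real.log_nonpos (hppos i).le (hple i)
    have hlM : ∀ i, l i ≤ M := hbound
    have hpexp : ∀ i, p i = Real.exp (-(l i)) := by
      intro i; rw [hl, neg_neg, Real.exp_log (hppos i)]
    have hK : (1 - Real.exp (-M)) / (Real.sqrt (Fintype.card Y) * M) ≤
        (1 - Real.exp (-M)) / M := by
      have hnum : 0 ≤ 1 - Real.exp (-M) := by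
        have := Real.exp_lt_one_iff.mpr (neg_lt_zero.mpr hM)
        linarith
      have hc1 : (1:ℝ) ≤ Real.sqrt (Fintype.card Y) := by
        rw [show (1:ℝ) = Real.sqrt 1 from (Real.sqrt_one).symm]
        apply Real.sqrt_le_sqrt
        exact_mod_cast Fintype.card_pos
      apply div_le_div_of_nonneg_left hnum hM
      nlinarith [hM]
    have key : ∀ i : Fin n,
        ((1 - Real.exp (-M)) / (Real.sqrt (Fintype.card Y) * M)) * l i ≤
        Real.sqrt (∑ y' : Y,
          ((if y' = y i then (-1 : ℝ) else 0) + Real.exp (f (x i) y') / S i) ^ 2) := by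
      intro i
      have h1 : ((1 - Real.exp (-M)) / (Real.sqrt (Fintype.card Y) * M)) * l i ≤
          ((1 - Real.exp (-M)) / M) * l i :=
        mul_le_mul_of_nonneg_right hK (hl0 i)
      have h2 : ((1 - Real.exp (-M)) / M) * l i ≤ 1 - p i := by
        rw [hpexp i]
        exact convex_exp_bound M (l i) hM (hl0 i) (hlM i)
      have h3 : 1 - p i ≤ Real.sqrt (∑ y' : Y,
          ((if y' = y i then (-1 : ℝ) else 0) + Real.exp (f (x i) y') / S i) ^ 2) := by
        have hterm : (1 - p i)^2 ≤ ∑ y' : Y,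
            ((if y' = y i then (-1 : ℝ) else 0) + Real.exp (f (x i) y') / S i) ^ 2 := by
          have := Finset.single_le_sum
            (f := fun y' => ((if y' = y i then (-1 : ℝ) else 0)
              + Real.exp (f (x i) y') / S i) ^ 2)
            (fun y' _ => sq_nonneg _) (Finset.mem_univ (y i))
          simpa [hp, show (-1 + Real.exp (f (x i) (y i)) / S i)^2 = (1 - Real.exp (f (x i) (y i)) / S i)^2 by ring] using this
        calc 1 - p i = Real.sqrt ((1 - p i)^2) := by
              rw [Real.sqrt_sq (by linarith [hple i])]
          _ ≤ _ := Real.sqrt_le_sqrt hterm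
      linarith
    -- sum up
    have hsum : ∑ i : Fin n,
        ((1 - Real.exp (-M)) / (Real.sqrt (Fintype.card Y) * M)) * l i ≤
        ∑ i : Fin n, Real.sqrt (∑ y' : Y,
          ((if y' = y i then (-1 : ℝ) else 0) + Real.exp (f (x i) y') / S i) ^ 2) :=
      Finset.sum_le_sum (fun i _ => key i)
    rw [← Finset.mul_sum] at hsum
    have hninv : 0 ≤ (1 : ℝ) / n := by positivity
    calc ((1 - Real.exp (-M)) / (Real.sqrt (Fintype.card Y) * M)) *
          ((1 / (n : ℝ)) * ∑ i : Fin n, -Real.log (Real.exp (f (x i) (y i)) / S i))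
        = (1 / (n : ℝ)) * (((1 - Real.exp (-M)) / (Real.sqrt (Fintype.card Y) * M)) *
          ∑ i : Fin n, l i) := by rw [hl, hp]; ring
      _ ≤ (1 / (n : ℝ)) * ∑ i : Fin n, Real.sqrt (∑ y' : Y,
          ((if y' = y i then (-1 : ℝ) else 0) + Real.exp (f (x i) y') / S i) ^ 2) :=
        mul_le_mul_of_nonneg_left hsum hninv
  · -- Y is empty
    have hc : (Fintype.card Y : ℝ) = 0 := by
      simp [Fintype.card_eq_zero_iff.mpr (not_nonempty_iff.mp hY)]
    have hempty : ∀ (g : Y → ℝ), ∑ y' : Y, g y' = 0 := fun g =>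
      Finset.sum_eq_zero (fun y' _ => absurd ⟨y'⟩ hY)
    simp [hc, hempty, Real.sqrt_zero]
end

section
/- Let G : {x_1,...,x_n} → ℝ^d with G(x_i) ≠ 0 for each i, and let ν_n be the uniform measure on these points. Define the normalized embedding ι(x) = G(x)/||G(x)||_2 and kernel k(x,x') = ι(x)^⊤ι(x'). Then the smoothed functional gradient norm satisfies E_{(X,X')∼ν_n²}[ (G(X)^⊤ G(X'))² / (||G(X)||_2 ||G(X')||_2) ] ≥ (1/d) · ( E_{ν_n}[ ||G(X)||_2 ] )². -/
open Finset in
/-- For the normalized embedding `ι(x) = G(x)/‖G(x)‖₂` and kernel `k(x,x') = ι(x)ᵀι(x')` built from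
a nowhere-vanishing `G : {x_1,…,x_n} → ℝ^d`, the smoothed functional gradient norm satisfies
`E_{(X,X')∼ν_n²}[(G(X)ᵀG(X'))² / (‖G(X)‖₂‖G(X')‖₂)] ≥ (1/d) (E_{ν_n} ‖G(X)‖₂)²`. -/
theorem stmt_6 (n d : ℕ) (hn : 0 < n) (hd : 0 < d)
    (G : Fin n → Fin d → ℝ) (hG : ∀ i, G i ≠ 0) :
    (1 / (n : ℝ) ^ 2) * ∑ i : Fin n, ∑ j : Fin n,
        (∑ a : Fin d, G i a * G j a) ^ 2 /
          (Real.sqrt (∑ a : Fin d, (G i a) ^ 2) * Real.sqrt (∑ a : Fin d, (G j a) ^ 2))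
      ≥ (1 / (d : ℝ)) *
        ((1 / (n : ℝ)) * ∑ i : Fin n, Real.sqrt (∑ a : Fin d, (G i a) ^ 2)) ^ 2 := by
  set S : Fin n → ℝ := fun i => Real.sqrt (∑ a : Fin d, (G i a) ^ 2) with hSdef
  have hSpos : ∀ i, 0 < S i := by
    intro i
    apply Real.sqrt_pos.mpr
    obtain ⟨a, ha⟩ := Function.ne_iff.mp (hG i)
    exact Finset.sum_pos' (fun a _ => sq_nonneg _) ⟨a, Finset.mem_univ a, lt_of_le_of_ne (sq_nonneg _) (Ne.symm (pow_ne_zero 2 ha))⟩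
  have hSsq : ∀ i, S i ^ 2 = ∑ a : Fin d, (G i a) ^ 2 := fun i =>
    Real.sq_sqrt (Finset.sum_nonneg fun a _ => sq_nonneg _)
  set T : Fin d → Fin d → ℝ := fun a b => ∑ i : Fin n, G i a * G i b / S i with hTdef
  -- Claim A: the double sum equals ∑ a ∑ b (T a b)^2
  have claimA : (∑ i : Fin n, ∑ j : Fin n,
      (∑ a : Fin d, G i a * G j a) ^ 2 / (S i * S j))
      = ∑ a : Fin d, ∑ b : Fin d, (T a b) ^ 2 := by
    have h1 : ∀ i j : Fin n, (∑ a : Fin d, G i a * G j a) ^ 2 / (S i * S j)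
        = ∑ a : Fin d, ∑ b : Fin d, (G i a * G i b / S i) * (G j a * G j b / S j) := by
      intro i j
      rw [sq, Finset.sum_mul_sum, Finset.sum_div]
      refine Finset.sum_congr rfl fun a _ => ?_
      rw [Finset.sum_div]
      refine Finset.sum_congr rfl fun b _ => ?_
      field_simp
    have h2 : ∀ a b : Fin d, (T a b) ^ 2
        = ∑ i : Fin n, ∑ j : Fin n, (G i a * G i b / S i) * (G j a * G j b / S j) := by
      intro a b
      rw [hTdef, sq, Finset.sum_mul_sum]
    simp only [h1, h2]
    set f : Fin n → Fin n → Fin d → Fin d → ℝ :=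
      fun i j a b => (G i a * G i b / S i) * (G j a * G j b / S j) with hf
    calc ∑ i, ∑ j, ∑ a, ∑ b, f i j a b
        = ∑ i, ∑ a, ∑ j, ∑ b, f i j a b :=
          Finset.sum_congr rfl fun i _ => Finset.sum_comm
      _ = ∑ a, ∑ i, ∑ j, ∑ b, f i j a b := Finset.sum_comm
      _ = ∑ a, ∑ i, ∑ b, ∑ j, f i j a b :=
          Finset.sum_congr rfl fun a _ => Finset.sum_congr rfl fun i _ => Finset.sum_comm
      _ = ∑ a, ∑ b, ∑ i, ∑ j, f i j a b :=
          Finset.sum_congr rfl fun a _ => Finset.sum_comm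
  -- Claim B: trace of T equals ∑ S
  have claimB : (∑ a : Fin d, T a a) = ∑ i : Fin n, S i := by
    rw [hTdef]
    rw [Finset.sum_comm]
    refine Finset.sum_congr rfl fun i _ => ?_
    have : ∑ a : Fin d, G i a * G i a / S i = (∑ a : Fin d, (G i a) ^ 2) / S i := by
      rw [Finset.sum_div]
      exact Finset.sum_congr rfl fun a _ => by rw [sq]
    rw [this, ← hSsq i, sq, mul_div_assoc, div_self (hSpos i).ne', mul_one]
  -- key inequality
  have key : (∑ i : Fin n, S i) ^ 2 / d ≤ ∑ a : Fin d, ∑ b : Fin d, (T a b) ^ 2 := by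
    have h3 : ∑ a : Fin d, (T a a) ^ 2 ≤ ∑ a : Fin d, ∑ b : Fin d, (T a b) ^ 2 :=
      Finset.sum_le_sum fun a _ =>
        Finset.single_le_sum (fun b _ => sq_nonneg (T a b)) (Finset.mem_univ a)
    have h4 : (∑ a : Fin d, T a a) ^ 2 ≤ (d : ℝ) * ∑ a : Fin d, (T a a) ^ 2 := by
      have := sq_sum_le_card_mul_sum_sq (s := (Finset.univ : Finset (Fin d)))
        (f := fun a => T a a)
      simpa using this
    rw [claimB] at h4
    rw [div_le_iff₀ (by positivity : (0:ℝ) < (d:ℝ))]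
    calc (∑ i : Fin n, S i) ^ 2 ≤ (d : ℝ) * ∑ a : Fin d, (T a a) ^ 2 := h4
      _ ≤ (∑ a : Fin d, ∑ b : Fin d, (T a b) ^ 2) * d := by
        rw [mul_comm]; exact mul_le_mul_of_nonneg_right h3 (by positivity)
  rw [ge_iff_le]
  have hn' : (0:ℝ) < n := by positivity
  calc (1 / (d : ℝ)) * ((1 / (n : ℝ)) * ∑ i : Fin n, S i) ^ 2
      = (1 / (n : ℝ) ^ 2) * ((∑ i : Fin n, S i) ^ 2 / d) := by ring
    _ ≤ (1 / (n : ℝ) ^ 2) * ∑ a : Fin d, ∑ b : Fin d, (T a b) ^ 2 := by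
        apply mul_le_mul_of_nonneg_left key (by positivity)
    _ = (1 / (n : ℝ) ^ 2) * ∑ i : Fin n, ∑ j : Fin n,
        (∑ a : Fin d, G i a * G j a) ^ 2 / (S i * S j) := by rw [claimA]
end
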